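/- Fu's expected spectrum for the Kingman coalescent: E[ξ_i^{(n)}] = θ/i for i = 1, ..., n-1, for the unfolded site frequency spectrum of an n-sample with mutation rate θ/2 under the Kingman coalescent. -/

import Mathlib

/-!
With `N = n - i - 1` and `t = k - 2`, the summand becomes `2 C(N,t) / ((t+1) C(N+i,t+1))`.
By `C(m,t+1) (t+1) = C(m,t) (m-t)` this is `(2/i) (r t - r (t+1))` for `r t = C(N,t) / C(N+i,t)`,
so the sum telescopes to `(2/i) (r 0 - r (N+1)) = 2/i`.
-/

open Finset

noncomputable def chooseRatio (N i t : ℕ) : ℝ := (N.choose t : ℝ) / ((N + i).choose t : ℝ)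

lemma cast_choose_succ_mul {n k : ℕ} (hk : k ≤ n) :
    (n.choose (k + 1) : ℝ) * (k + 1) = n.choose k * (n - k) := by
  have h := congrArg (Nat.cast : ℕ → ℝ) (Nat.choose_succ_right_eq n k)
  push_cast [Nat.cast_sub hk] at h
  exact h

lemma chooseRatio_sub_succ {N i t : ℕ} (ht : t < N + i) :
    chooseRatio N i t - chooseRatio N i (t + 1) =
      i * N.choose t / ((t + 1) * (N + i).choose (t + 1)) := by
  have hM : ((N + i).choose (t + 1) : ℝ) ≠ 0 := by positivity [Nat.choose_pos ht]
  have hM' : ((N + i).choose t : ℝ) ≠ 0 := by positivity [Nat.choose_pos ht.le]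
  have hMsucc := cast_choose_succ_mul ht.le
  rcases le_or_gt t N with htN | htN
  · have hNsucc := cast_choose_succ_mul htN
    unfold chooseRatio
    field_simp
    push_cast at hMsucc
    linear_combination (N.choose t : ℝ) * hMsucc - ((N + i).choose t : ℝ) * hNsucc
  · simp [chooseRatio, Nat.choose_eq_zero_of_lt htN,
      Nat.choose_eq_zero_of_lt (htN.trans t.lt_succ_self)]

lemma sum_range_choose_div_succ_mul_choose (N : ℕ) {i : ℕ} (hi : 1 ≤ i) :
    ∑ t ∈ range (N + 1), (N.choose t : ℝ) / ((t + 1) * (N + i).choose (t + 1)) = 1 / i := by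
  have hi' : (i : ℝ) ≠ 0 := by positivity
  have htelescope : ∀ t ∈ range (N + 1),
      (N.choose t : ℝ) / ((t + 1) * (N + i).choose (t + 1)) =
        (chooseRatio N i t - chooseRatio N i (t + 1)) / i := by
    intro t ht
    rw [chooseRatio_sub_succ (by grind)]
    field_simp
  rw [sum_congr rfl htelescope, ← sum_div, sum_range_sub']
  simp [chooseRatio]

lemma sum_Icc_add_eq_sum_range {M : Type*} [AddCommMonoid M] (f : ℕ → M) (a N : ℕ) :
    ∑ k ∈ Icc a (N + a), f k = ∑ t ∈ range (N + 1), f (t + a) := by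
  rw [← Ico_add_one_right_eq_Icc, sum_Ico_eq_sum_range, show N + a + 1 - a = N + 1 by omega]
  simp only [add_comm]

theorem fu_expected_sfs_general (θ : ℝ) (n i : ℕ) (hi : 1 ≤ i)
    (hin : i ≤ n - 1) :
    θ / 2 * ∑ k ∈ Finset.Icc 2 (n - i + 1),
        ((n - i - 1).choose (k - 2) : ℝ) / ((n - 1).choose (k - 1) : ℝ) *
          (k : ℝ) * (2 / ((k : ℝ) * ((k : ℝ) - 1))) =
      θ / (i : ℝ) := by
  obtain ⟨N, rfl⟩ : ∃ N, n = N + i + 1 := ⟨n - i - 1, by omega⟩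
  rw [show N + i + 1 - i + 1 = N + 2 by omega, show N + i + 1 - i - 1 = N by omega,
    show N + i + 1 - 1 = N + i by omega, sum_Icc_add_eq_sum_range]
  have hterm : ∀ t ∈ range (N + 1),
      (N.choose (t + 2 - 2) : ℝ) / ((N + i).choose (t + 2 - 1) : ℝ) * ((t + 2 : ℕ) : ℝ) *
          (2 / (((t + 2 : ℕ) : ℝ) * (((t + 2 : ℕ) : ℝ) - 1))) =
        2 * ((N.choose t : ℝ) / ((t + 1) * (N + i).choose (t + 1))) := by
    intro t ht
    have hM : ((N + i).choose (t + 1) : ℝ) ≠ 0 := by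
      positivity [Nat.choose_pos (show t + 1 ≤ N + i by grind)]
    rw [show t + 2 - 2 = t by omega, show t + 2 - 1 = t + 1 by omega]
    push_cast
    rw [show (t : ℝ) + 2 - 1 = t + 1 by ring]
    field_simp
  rw [sum_congr rfl hterm, ← mul_sum, sum_range_choose_div_succ_mul_choose N hi]
  field_simp

/-- Fu's expected spectrum for the Kingman coalescent: with
p^{(n)}[k,i] = C(n-i-1,k-2)/C(n-1,k-1) and k E[T_k] = k ⋅ 2/(k(k-1)),
E[ξ_i^{(n)}] = (θ/2) ∑_{k=2}^{n-i+1} p^{(n)}[k,i] k ⋅ 2/(k(k-1)) = θ/i. -/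
theorem fu_expected_sfs (θ : ℝ) (n i : ℕ) (hn : 2 ≤ n) (hi : 1 ≤ i)
    (hin : i ≤ n - 1) :
    θ / 2 * ∑ k ∈ Finset.Icc 2 (n - i + 1),
        ((n - i - 1).choose (k - 2) : ℝ) / ((n - 1).choose (k - 1) : ℝ) *
          (k : ℝ) * (2 / ((k : ℝ) * ((k : ℝ) - 1))) =
      θ / (i : ℝ) :=
  fu_expected_sfs_general θ n i hi hin
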